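/- Let c > 0 and K₀ be the absolute constants from the L²-flattening lemma. Let p be a prime, η a symmetric probability measure on SL₂(𝔽_p), and K a real number with K₀ ≤ K < p^{1/10}, such that η(gH) < K^{-1} for every proper subgroup H of SL₂(𝔽_p) and every g ∈ SL₂(𝔽_p). Then for every ℓ ∈ ℕ, ‖η^{(2^ℓ)}‖₂ ≤ K^{-c·ℓ} · ‖η‖₂ + K · p^{-3/2}. -/

import Mathlib

/-!
Put `a ℓ = ‖η^{(2^ℓ)}‖₂`. Every `η^{(2^ℓ)}` is again a symmetric probability measure whose coset
masses are `< K⁻¹` (the coset masses of `ν ∗ η` are `ν`-averages of those of `η`), and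
`η^{(2^{ℓ+1})} = η^{(2^ℓ)} ∗ η^{(2^ℓ)}`. Hence the flattening lemma gives
`a (ℓ + 1) ≤ K^{-c} · a ℓ` as long as `a ℓ > K p^{-3/2}`, while Young's inequality
`‖ν ∗ f‖₂ ≤ ‖f‖₂` makes `a` nonincreasing, so that once `a` falls below the threshold it stays
there.
-/

open scoped Classical

/-- Convolution of two real functions on a finite group:
`(f₁ ∗ f₂)(x) = ∑_h f₁(h)·f₂(h⁻¹x)`. -/
noncomputable def conv {G : Type*} [Group G] [Fintype G] (f₁ f₂ : G → ℝ) : G → ℝ :=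
  fun x => ∑ h, f₁ h * f₂ (h⁻¹ * x)

/-- The `ℓ`-fold convolution `f^{(ℓ)}` of `f` with itself (with `f^{(0)}` the point
mass at the identity, so that `f^{(1)} = f`). -/
noncomputable def iterConv {G : Type*} [Group G] [Fintype G] (f : G → ℝ) : ℕ → G → ℝ
  | 0 => fun x => if x = 1 then 1 else 0
  | n + 1 => conv (iterConv f n) f

/-- `‖f‖₂ = (∑_g f(g)²)^{1/2}`. -/
noncomputable def l2Norm {G : Type*} [Fintype G] (f : G → ℝ) : ℝ :=
  Real.sqrt (∑ g, f g ^ 2)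

/-- `‖f‖_∞ = max_g f(g)` (for a function on a finite type). -/
noncomputable def supNorm {G : Type*} [Fintype G] (f : G → ℝ) : ℝ :=
  ⨆ g, f g

/-- The mass `η(gH) = ∑_{h ∈ H} η(g·h)` that `η` gives to the coset `gH`. -/
noncomputable def cosetMass {G : Type*} [Group G] [Fintype G] (η : G → ℝ) (g : G)
    (H : Subgroup G) : ℝ :=
  ∑ h : H, η (g * h)

/-- `η` is a probability measure on the finite group `G`: it is nonnegative and sums to 1. -/
def IsProbMeasure {G : Type*} [Group G] [Fintype G] (η : G → ℝ) : Prop :=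
  (∀ g, 0 ≤ η g) ∧ ∑ g, η g = 1

/-- `η` is symmetric: `η(g) = η(g⁻¹)` for all `g`. -/
def IsSymmetric {G : Type*} [Group G] (η : G → ℝ) : Prop :=
  ∀ g, η g = η g⁻¹

lemma le_pow_mul_add_of_succ_le {a : ℕ → ℝ} {r b : ℝ} (hr : 0 ≤ r) (hb : 0 ≤ b)
    (ha₀ : 0 ≤ a 0) (hmono : ∀ n, a (n + 1) ≤ a n)
    (hcontract : ∀ n, b < a n → a (n + 1) ≤ r * a n) (n : ℕ) :
    a n ≤ r ^ n * a 0 + b := by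
  rcases le_or_gt r 1 with hr₁ | hr₁
  · induction n with
    | zero => simpa using hb
    | succ n ih =>
      rcases lt_or_ge b (a n) with hbig | hsmall
      · calc a (n + 1) ≤ r * a n := hcontract n hbig
          _ ≤ r * (r ^ n * a 0 + b) := mul_le_mul_of_nonneg_left ih hr
          _ = r ^ (n + 1) * a 0 + r * b := by ring
          _ ≤ r ^ (n + 1) * a 0 + b := by gcongr; exact mul_le_of_le_one_left hb hr₁
      · have : 0 ≤ r ^ (n + 1) * a 0 := by positivity
        linarith [hmono n]
  · calc a n ≤ a 0 := antitone_nat_of_succ_le hmono (Nat.zero_le n)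
      _ ≤ r ^ n * a 0 := le_mul_of_one_le_left ha₀ (one_le_pow₀ hr₁.le)
      _ ≤ r ^ n * a 0 + b := le_add_of_nonneg_right hb

lemma Matrix.SpecialLinearGroup.nontrivial_fin_two {R : Type*} [CommRing R] [Nontrivial R] :
    Nontrivial (Matrix.SpecialLinearGroup (Fin 2) R) := by
  refine ⟨⟨⟨!![1, 1; 0, 1], by simp [Matrix.det_fin_two_of]⟩, 1, fun h => ?_⟩⟩
  simpa using congrArg (fun M : Matrix.SpecialLinearGroup (Fin 2) R => M 0 1) h

lemma l2Norm_nonneg {G : Type*} [Fintype G] (f : G → ℝ) : 0 ≤ l2Norm f := Real.sqrt_nonneg _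

section Convolution

variable {G : Type*} [Group G] [Fintype G]

lemma conv_iterConv_zero (f g : G → ℝ) : conv f (iterConv g 0) = f := by
  funext x
  simp [conv, iterConv, inv_mul_eq_one]

lemma iterConv_zero_conv (f g : G → ℝ) : conv (iterConv g 0) f = f := by
  funext x
  simp [conv, iterConv]

lemma conv_assoc (f g h : G → ℝ) : conv (conv f g) h = conv f (conv g h) := by
  funext x
  simp only [conv, Finset.sum_mul, Finset.mul_sum]
  rw [Finset.sum_comm]
  refine Finset.sum_congr rfl fun b _ => ?_
  rw [← Equiv.sum_comp (Equiv.mulLeft b⁻¹) (fun i => f b * (g i * h (i⁻¹ * (b⁻¹ * x))))]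
  simp [mul_assoc]

lemma iterConv_one (f : G → ℝ) : iterConv f 1 = f :=
  iterConv_zero_conv f f

lemma iterConv_add (f : G → ℝ) (m n : ℕ) :
    iterConv f (m + n) = conv (iterConv f m) (iterConv f n) := by
  induction n with
  | zero => rw [Nat.add_zero, conv_iterConv_zero]
  | succ n ih => rw [← Nat.add_assoc, iterConv, ih, conv_assoc, iterConv]

lemma iterConv_succ' (f : G → ℝ) (n : ℕ) : iterConv f (n + 1) = conv f (iterConv f n) := by
  rw [Nat.add_comm, iterConv_add, iterConv_one]

lemma iterConv_two_pow_succ (f : G → ℝ) (n : ℕ) :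
    iterConv f (2 ^ (n + 1)) = conv (iterConv f (2 ^ n)) (iterConv f (2 ^ n)) := by
  rw [pow_succ, Nat.mul_two, iterConv_add]

lemma IsProbMeasure.conv {f g : G → ℝ} (hf : IsProbMeasure f) (hg : IsProbMeasure g) :
    IsProbMeasure (conv f g) := by
  refine ⟨fun x => Finset.sum_nonneg fun h _ => mul_nonneg (hf.1 h) (hg.1 _), ?_⟩
  have hshift : ∀ h : G, ∑ x, g (h⁻¹ * x) = 1 := fun h => by
    rw [← hg.2]; exact Equiv.sum_comp (Equiv.mulLeft h⁻¹) g
  simp only [_root_.conv]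
  rw [Finset.sum_comm]
  simp [← Finset.mul_sum, hshift, hf.2]

lemma IsProbMeasure.iterConv {f : G → ℝ} (hf : IsProbMeasure f) (n : ℕ) :
    IsProbMeasure (iterConv f n) := by
  induction n with
  | zero => exact ⟨fun g => by dsimp [_root_.iterConv]; positivity, by simp [_root_.iterConv]⟩
  | succ n ih => exact ih.conv hf

lemma conv_apply_inv {f g : G → ℝ} (hf : IsSymmetric f) (hg : IsSymmetric g) (x : G) :
    conv f g x⁻¹ = conv g f x := by
  unfold conv
  rw [← Equiv.sum_comp (Equiv.mulLeft x) (fun h => g h * f (h⁻¹ * x))]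
  refine Finset.sum_congr rfl fun h _ => ?_
  simp only [Equiv.coe_mulLeft, mul_inv_rev, inv_mul_cancel_right]
  rw [← hf h, hg (x * h), mul_inv_rev, mul_comm]

lemma IsSymmetric.iterConv {f : G → ℝ} (hf : IsSymmetric f) (n : ℕ) :
    IsSymmetric (iterConv f n) := by
  induction n with
  | zero => intro x; simp [_root_.iterConv, inv_eq_one]
  | succ n ih =>
    intro x
    change _root_.iterConv f (n + 1) x = conv (_root_.iterConv f n) f x⁻¹
    rw [conv_apply_inv ih hf, iterConv_succ']

lemma l2Norm_conv_le {ν f : G → ℝ} (hν : IsProbMeasure ν) : l2Norm (conv ν f) ≤ l2Norm f := by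
  refine Real.sqrt_le_sqrt ?_
  calc ∑ x, conv ν f x ^ 2 ≤ ∑ x, ∑ h, ν h * f (h⁻¹ * x) ^ 2 := by
        refine Finset.sum_le_sum fun x _ => ?_
        -- Cauchy–Schwarz with weights `ν h`, which sum to `1`
        have hcs := Finset.sum_sq_le_sum_mul_sum_of_sq_le_mul Finset.univ
          (r := fun h => ν h * f (h⁻¹ * x)) (fun i _ => hν.1 i)
          (fun i _ => mul_nonneg (hν.1 i) (sq_nonneg (f (i⁻¹ * x)))) (fun i _ => le_of_eq (by ring))
        rwa [hν.2, one_mul] at hcs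
    _ = ∑ h, ν h * ∑ x, f (h⁻¹ * x) ^ 2 := by
        rw [Finset.sum_comm]; simp [Finset.mul_sum]
    _ = ∑ x, f x ^ 2 := by
        have hshift (h : G) : ∑ x, f (h⁻¹ * x) ^ 2 = ∑ x, f x ^ 2 :=
          Equiv.sum_comp (Equiv.mulLeft h⁻¹) (fun x => f x ^ 2)
        simp only [hshift, ← Finset.sum_mul, hν.2, one_mul]

lemma cosetMass_nonneg {η : G → ℝ} (hη : ∀ x, 0 ≤ η x) (g : G) (H : Subgroup G) :
    0 ≤ cosetMass η g H :=
  Finset.sum_nonneg fun _ _ => hη _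

lemma cosetMass_conv (ν η : G → ℝ) (g : G) (H : Subgroup G) :
    cosetMass (conv ν η) g H = ∑ k, ν k * cosetMass η (k⁻¹ * g) H := by
  unfold cosetMass conv
  rw [Finset.sum_comm]
  simp [Finset.mul_sum, mul_assoc]

lemma cosetMass_conv_lt {ν η : G → ℝ} (hν : IsProbMeasure ν) {H : Subgroup G} {B : ℝ}
    (hη : ∀ g, cosetMass η g H < B) (g : G) : cosetMass (conv ν η) g H < B := by
  obtain ⟨k₀, -, hk₀⟩ : ∃ k ∈ Finset.univ, ν k ≠ 0 :=
    Finset.exists_ne_zero_of_sum_ne_zero (by rw [hν.2]; exact one_ne_zero)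
  calc cosetMass (conv ν η) g H = ∑ k, ν k * cosetMass η (k⁻¹ * g) H := cosetMass_conv ν η g H
    _ < ∑ k, ν k * B :=
        Finset.sum_lt_sum (fun k _ => mul_le_mul_of_nonneg_left (hη _).le (hν.1 k))
          ⟨k₀, Finset.mem_univ _, mul_lt_mul_of_pos_left (hη _) ((hν.1 k₀).lt_of_ne' hk₀)⟩
    _ = B := by rw [← Finset.sum_mul, hν.2, one_mul]

lemma cosetMass_iterConv_lt {η : G → ℝ} (hη : IsProbMeasure η) {H : Subgroup G} {B : ℝ}
    (hB : ∀ g, cosetMass η g H < B) {n : ℕ} (hn : n ≠ 0) (g : G) :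
    cosetMass (iterConv η n) g H < B := by
  obtain ⟨m, rfl⟩ := Nat.exists_eq_succ_of_ne_zero hn
  exact cosetMass_conv_lt (hη.iterConv m) hB g

end Convolution

theorem iterated_l2_flattening_general
    (c : ℝ) (K₀ : ℝ)
    (hflat : ∀ (p : ℕ) [Fact p.Prime],
      ∀ η : Matrix.SpecialLinearGroup (Fin 2) (ZMod p) → ℝ,
        IsProbMeasure η → IsSymmetric η →
        ∀ K : ℝ, K₀ ≤ K → K < (p : ℝ) ^ ((1 : ℝ) / 10) →
          (∀ H : Subgroup (Matrix.SpecialLinearGroup (Fin 2) (ZMod p)), H ≠ ⊤ →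
            ∀ g, cosetMass η g H < K⁻¹) →
          l2Norm η > K * (p : ℝ) ^ (-(3 : ℝ) / 2) →
          l2Norm (conv η η) < K ^ (-c) * l2Norm η)
    (p : ℕ) [Fact p.Prime]
    (η : Matrix.SpecialLinearGroup (Fin 2) (ZMod p) → ℝ)
    (hη : IsProbMeasure η) (hsym : IsSymmetric η)
    (K : ℝ) (hK₀ : K₀ ≤ K) (hK : K < (p : ℝ) ^ ((1 : ℝ) / 10))
    (hcoset : ∀ H : Subgroup (Matrix.SpecialLinearGroup (Fin 2) (ZMod p)), H ≠ ⊤ →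
      ∀ g, cosetMass η g H < K⁻¹) :
    ∀ ℓ : ℕ, l2Norm (iterConv η (2 ^ ℓ)) ≤ K ^ (-(c * ℓ)) * l2Norm η
      + K * (p : ℝ) ^ (-(3 : ℝ) / 2) := by
  have := Matrix.SpecialLinearGroup.nontrivial_fin_two (R := ZMod p)
  have hKpos : 0 < K :=
    inv_pos.mp ((cosetMass_nonneg hη.1 1 ⊥).trans_lt (hcoset ⊥ bot_ne_top 1))
  intro ℓ
  have hbound := le_pow_mul_add_of_succ_le (a := fun n => l2Norm (iterConv η (2 ^ n)))
    (b := K * (p : ℝ) ^ (-(3 : ℝ) / 2))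
    (Real.rpow_nonneg hKpos.le (-c)) (by positivity) (l2Norm_nonneg _)
    (fun n => by
      simpa only [iterConv_two_pow_succ] using l2Norm_conv_le (hη.iterConv (2 ^ n)))
    (fun n hn => by
      simp only [iterConv_two_pow_succ]
      exact (hflat p _ (hη.iterConv _) (hsym.iterConv _) K hK₀ hK
        (fun H hH => cosetMass_iterConv_lt hη (hcoset H hH) (pow_ne_zero n two_ne_zero)) hn).le)
    ℓ
  rwa [pow_zero, iterConv_one, ← Real.rpow_natCast, ← Real.rpow_mul hKpos.le, neg_mul]
    at hbound

/-- Iterating the `L²`-flattening lemma: if `c > 0` and `K₀` are absolute constants for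
which the flattening lemma holds, `p` is a prime, `η` a symmetric probability measure on
`SL₂(𝔽_p)` and `K₀ ≤ K < p^{1/10}` with `η(gH) < K⁻¹` for all proper subgroups `H` and
all `g`, then `‖η^{(2^ℓ)}‖₂ ≤ K^{-cℓ}·‖η‖₂ + K·p^{-3/2}` for every `ℓ ∈ ℕ`. -/
theorem iterated_l2_flattening
    (c : ℝ) (hc : 0 < c) (K₀ : ℝ)
    (hflat : ∀ (p : ℕ) [Fact p.Prime],
      ∀ η : Matrix.SpecialLinearGroup (Fin 2) (ZMod p) → ℝ,
        IsProbMeasure η → IsSymmetric η →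
        ∀ K : ℝ, K₀ ≤ K → K < (p : ℝ) ^ ((1 : ℝ) / 10) →
          (∀ H : Subgroup (Matrix.SpecialLinearGroup (Fin 2) (ZMod p)), H ≠ ⊤ →
            ∀ g, cosetMass η g H < K⁻¹) →
          l2Norm η > K * (p : ℝ) ^ (-(3 : ℝ) / 2) →
          l2Norm (conv η η) < K ^ (-c) * l2Norm η)
    (p : ℕ) [Fact p.Prime]
    (η : Matrix.SpecialLinearGroup (Fin 2) (ZMod p) → ℝ)
    (hη : IsProbMeasure η) (hsym : IsSymmetric η)
    (K : ℝ) (hK₀ : K₀ ≤ K) (hK : K < (p : ℝ) ^ ((1 : ℝ) / 10))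
    (hcoset : ∀ H : Subgroup (Matrix.SpecialLinearGroup (Fin 2) (ZMod p)), H ≠ ⊤ →
      ∀ g, cosetMass η g H < K⁻¹) :
    ∀ ℓ : ℕ, l2Norm (iterConv η (2 ^ ℓ)) ≤ K ^ (-(c * ℓ)) * l2Norm η
      + K * (p : ℝ) ^ (-(3 : ℝ) / 2) :=
  iterated_l2_flattening_general c K₀ hflat p η hη hsym K hK₀ hK hcoset
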